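/- Let n ≥ 1, r > 0, p > 0, ε > 0, and let λ₁,…,λₙ be real numbers with λ_ℓ ≥ ε for all ℓ. Let s be a holomorphic function on an open neighborhood of the closed polydisk Δⁿ(0,r) = {z ∈ ℂⁿ : |z_ℓ| ≤ r for ℓ = 1,…,n}. Then |s(0)|² ≤ (pⁿ λ₁ ⋯ λₙ / E(r√(pε))ⁿ) · ∫_{Δⁿ(0,r)} |s(z)|² exp(−2p ∑_{ℓ=1}^{n} λ_ℓ |z_ℓ|²) dm(z), where E(u) := (π/2)(1 − e^{−2u²}). -/

import Mathlib

/-!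
On a circle of radius `t`, the mean value property and Jensen's inequality give
`‖f 0‖² ≤ circleAverage ‖f‖² 0 t`. Integrating this in polar coordinates against a radial weight
`w ≥ 0` gives `‖f 0‖² ∫_{|ζ| ≤ r} w |ζ| ≤ ∫_{|ζ| ≤ r} ‖f ζ‖² w |ζ|`, and Fubini, one coordinate
at a time, gives the same inequality on the polydisk for a product weight `∏ w_ℓ |z_ℓ|`.
For `w_ℓ t = exp (-2pλ_ℓ t²)` the one-variable integral is `π (1 - e^{-2pλ_ℓ r²}) / (2pλ_ℓ)`,
which is at least `E (r √(pε)) / (pλ_ℓ)` since `λ_ℓ ≥ ε`.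
-/

open MeasureTheory

noncomputable def E (u : ℝ) : ℝ := Real.pi / 2 * (1 - Real.exp (-2 * u ^ 2))

open Metric Real Set

theorem sq_norm_le_circleAverage_sq_norm {V : Type*} [NormedAddCommGroup V] [NormedSpace ℂ V]
    [CompleteSpace V] {f : ℂ → V} {c : ℂ} {R : ℝ} (hf : DiffContOnCl ℂ f (ball c |R|)) :
    ‖f c‖ ^ 2 ≤ circleAverage (fun z ↦ ‖f z‖ ^ 2) c R := by
  rcases eq_or_ne R 0 with rfl | hR
  · simp
  have hcont : Continuous fun θ ↦ f (circleMap c R θ) := by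
    refine hf.continuousOn.comp_continuous (continuous_circleMap c R) fun θ ↦ ?_
    rw [closure_ball c (abs_ne_zero.2 hR)]
    exact sphere_subset_closedBall (circleMap_mem_sphere' c R θ)
  have hsq : ConvexOn ℝ univ fun x : V ↦ ‖x‖ ^ 2 :=
    convexOn_univ_norm.pow (fun x _ ↦ norm_nonneg x) 2
  rw [← hf.circleAverage, circleAverage_eq_intervalAverage, circleAverage_eq_intervalAverage]
  refine hsq.map_set_average_le (continuous_norm.pow 2).continuousOn isClosed_univ ?_ ?_
    (ae_of_all _ fun _ ↦ mem_univ _) ?_ ?_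
  · simp
  · simp [ENNReal.mul_eq_top]
  · exact (hcont.intervalIntegrable 0 (2 * π)).def'
  · exact ((continuous_norm.pow 2).comp hcont |>.intervalIntegrable 0 (2 * π)).def'

theorem Complex.polarCoord_symm_eq_circleMap (p : ℝ × ℝ) :
    Complex.polarCoord.symm p = circleMap 0 p.1 p.2 := by
  simp [Complex.polarCoord_symm_apply, circleMap, Complex.exp_mul_I, ← Complex.ofReal_cos,
    ← Complex.ofReal_sin]

theorem setIntegral_closedBall_eq_intervalIntegral_circleAverage {g : ℂ → ℝ} {ρ : ℝ} (hρ : 0 ≤ ρ)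
    (hg : ContinuousOn g (closedBall 0 ρ)) :
    ∫ z in closedBall (0 : ℂ) ρ, g z = 2 * π * ∫ t in 0..ρ, t * circleAverage g 0 t := by
  set A := Ioc 0 ρ ×ˢ Ioo (-π) π
  set H : ℝ × ℝ → ℝ := fun p ↦ p.1 * g (circleMap 0 p.1 p.2)
  have hpolar : ∫ z in closedBall (0 : ℂ) ρ, g z = ∫ p in A, H p := by
    have hA : A ⊆ polarCoord.target := prod_mono Ioc_subset_Ioi_self subset_rfl
    rw [← integral_indicator isClosed_closedBall.measurableSet,
      ← Complex.integral_comp_polarCoord_symm, ← inter_eq_self_of_subset_right hA,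
      ← setIntegral_indicator (measurableSet_Ioc.prod measurableSet_Ioo)]
    refine setIntegral_congr_fun polarCoord.open_target.measurableSet ?_
    rintro ⟨t, θ⟩ ⟨ht, hθ⟩
    simp only [Complex.polarCoord_symm_eq_circleMap]
    by_cases htρ : t ≤ ρ <;> simp_all [indicator, abs_of_pos, A, H]
  have hH : IntegrableOn H A := by
    have hK : IsCompact (Icc 0 ρ ×ˢ Icc (-π) π) := isCompact_Icc.prod isCompact_Icc
    refine (ContinuousOn.integrableOn_compact hK ?_).mono_set
      (prod_mono Ioc_subset_Icc_self Ioo_subset_Icc_self)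
    refine continuousOn_fst.mul (hg.comp (by fun_prop) fun p hp ↦ ?_)
    simp [abs_of_nonneg hp.1.1, hp.1.2]
  have hinner : ∀ t, ∫ θ in Ioo (-π) π, H (t, θ) = 2 * π * (t * circleAverage g 0 t) := by
    intro t
    have hper : Function.Periodic (fun θ ↦ g (circleMap 0 t θ)) (2 * π) :=
      fun θ ↦ by simp [periodic_circleMap 0 t θ]
    rw [← integral_Ioc_eq_integral_Ioo, ← intervalIntegral.integral_of_le (by linarith [pi_pos]),
      intervalIntegral.integral_const_mul, circleAverage_def, smul_eq_mul]
    have := hper.intervalIntegral_add_eq (-π) 0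
    rw [show -π + 2 * π = π by ring, zero_add] at this
    rw [this]
    field_simp
  rw [hpolar, Measure.volume_eq_prod, setIntegral_prod _ hH]
  simp only [hinner]
  rw [integral_const_mul, intervalIntegral.integral_of_le hρ]

theorem intervalIntegrable_mul_circleAverage {g : ℂ → ℝ} {ρ : ℝ} (hρ : 0 ≤ ρ)
    (hg : ContinuousOn g (closedBall 0 ρ)) :
    IntervalIntegrable (fun t ↦ t * circleAverage g 0 t) volume 0 ρ := by
  have hg' : ContinuousOn g {z : ℂ | ‖z - 0‖ ∈ Icc 0 ρ} :=
    hg.mono fun z hz ↦ by simpa using hz.2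
  exact (continuousOn_id.mul (hg'.circleAverage fun t ht ↦ ht.1)).intervalIntegrable_of_Icc hρ

theorem setIntegral_closedBall_mono_of_circleAverage_le {g₁ g₂ : ℂ → ℝ} {ρ : ℝ} (hρ : 0 ≤ ρ)
    (hg₁ : ContinuousOn g₁ (closedBall 0 ρ)) (hg₂ : ContinuousOn g₂ (closedBall 0 ρ))
    (h : ∀ t ∈ Icc 0 ρ, circleAverage g₁ 0 t ≤ circleAverage g₂ 0 t) :
    ∫ z in closedBall (0 : ℂ) ρ, g₁ z ≤ ∫ z in closedBall (0 : ℂ) ρ, g₂ z := by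
  rw [setIntegral_closedBall_eq_intervalIntegral_circleAverage hρ hg₁,
    setIntegral_closedBall_eq_intervalIntegral_circleAverage hρ hg₂]
  gcongr
  exact intervalIntegral.integral_mono_on hρ (intervalIntegrable_mul_circleAverage hρ hg₁)
    (intervalIntegrable_mul_circleAverage hρ hg₂) fun t ht ↦
    mul_le_mul_of_nonneg_left (h t ht) ht.1

theorem sq_norm_mul_setIntegral_closedBall_le {V : Type*} [NormedAddCommGroup V]
    [NormedSpace ℂ V] [CompleteSpace V] {f : ℂ → V} {ρ : ℝ} (hρ : 0 ≤ ρ)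
    (hf : DifferentiableOn ℂ f (closedBall 0 ρ)) {w : ℝ → ℝ} (hw : Continuous w) (hw₀ : 0 ≤ w) :
    ‖f 0‖ ^ 2 * ∫ z in closedBall (0 : ℂ) ρ, w ‖z‖ ≤
      ∫ z in closedBall (0 : ℂ) ρ, ‖f z‖ ^ 2 * w ‖z‖ := by
  rw [← integral_const_mul]
  refine setIntegral_closedBall_mono_of_circleAverage_le hρ (by fun_prop)
    ((hf.continuousOn.norm.pow 2).mul (by fun_prop)) fun t ht ↦ ?_
  have hnorm : ∀ z ∈ sphere (0 : ℂ) |t|, ‖z‖ = t := by simp [abs_of_nonneg ht.1]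
  rw [circleAverage_const_on_circle fun z hz ↦ by rw [hnorm z hz],
    circleAverage_congr_sphere (f₂ := fun z ↦ w t • ‖f z‖ ^ 2) fun z hz ↦ by
      simp [hnorm z hz, mul_comm],
    circleAverage_fun_smul, smul_eq_mul, mul_comm]
  have hball : closure (ball (0 : ℂ) |t|) ⊆ closedBall 0 ρ :=
    closure_ball_subset_closedBall.trans
      (closedBall_subset_closedBall (by rw [abs_of_nonneg ht.1]; exact ht.2))
  exact mul_le_mul_of_nonneg_left
    (sq_norm_le_circleAverage_sq_norm ((hf.mono hball).diffContOnCl)) (hw₀ t)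

theorem setIntegral_closedBall_exp_neg_mul_sq_norm {b ρ : ℝ} (hb : b ≠ 0) (hρ : 0 ≤ ρ) :
    ∫ z in closedBall (0 : ℂ) ρ, rexp (-b * ‖z‖ ^ 2) = π * (1 - rexp (-b * ρ ^ 2)) / b := by
  have hderiv : ∀ t : ℝ, HasDerivAt (fun u ↦ -rexp (-b * u ^ 2) / (2 * b))
      (t * rexp (-b * t ^ 2)) t := fun t ↦ by
    refine (((hasDerivAt_pow 2 t).const_mul (-b)).exp.neg.div_const (2 * b)).congr_deriv ?_
    field_simp
    ring
  rw [setIntegral_closedBall_eq_intervalIntegral_circleAverage hρ (by fun_prop)]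
  have havg : ∀ t, circleAverage (fun z ↦ rexp (-b * ‖z‖ ^ 2)) 0 t = rexp (-b * t ^ 2) :=
    fun t ↦ circleAverage_const_on_circle fun z hz ↦ by simp_all
  simp only [havg]
  rw [intervalIntegral.integral_eq_sub_of_hasDerivAt (fun t _ ↦ hderiv t)
    ((by fun_prop : Continuous _).intervalIntegrable _ _), zero_pow two_ne_zero, mul_zero,
    exp_zero]
  field_simp
  ring

theorem Fin.cons_mem_closedBall_zero_iff {V : Type*} [SeminormedAddCommGroup V] {n : ℕ}
    {r : ℝ} (hr : 0 ≤ r) {x : V} {y : Fin n → V} :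
    (Fin.cons x y : Fin (n + 1) → V) ∈ closedBall 0 r ↔
      x ∈ closedBall 0 r ∧ y ∈ closedBall 0 r := by
  simp only [mem_closedBall_zero_iff, pi_norm_le_iff_of_nonneg hr, Fin.forall_fin_succ,
    Fin.cons_zero, Fin.cons_succ]

theorem setIntegral_closedBall_fin_succ {V : Type*} [NormedAddCommGroup V] [NormedSpace ℝ V]
    {n : ℕ} {r : ℝ} (hr : 0 ≤ r) (F : (Fin (n + 1) → ℂ) → V) :
    ∫ z in closedBall 0 r, F z =
      ∫ q in closedBall (0 : ℂ) r ×ˢ closedBall (0 : Fin n → ℂ) r, F (Fin.cons q.1 q.2) := by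
  have he := (volume_preserving_piFinSuccAbove (fun _ : Fin (n + 1) ↦ ℂ) 0).symm
  have hsymm : ∀ q : ℂ × (Fin n → ℂ),
      (MeasurableEquiv.piFinSuccAbove (fun _ ↦ ℂ) 0).symm q = Fin.cons q.1 q.2 :=
    fun q ↦ Fin.insertNth_zero' q.1 q.2
  have hpre : (MeasurableEquiv.piFinSuccAbove (fun _ ↦ ℂ) 0).symm ⁻¹' closedBall 0 r =
      closedBall (0 : ℂ) r ×ˢ closedBall (0 : Fin n → ℂ) r := by
    ext q
    simp only [mem_preimage, hsymm, Fin.cons_mem_closedBall_zero_iff hr, mem_prod]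
  simp only [← hpre, ← hsymm, he.setIntegral_preimage_emb (MeasurableEquiv.measurableEmbedding _)]

theorem setIntegral_closedBall_le_of_le_setIntegral_slice {n : ℕ} {r : ℝ} (hr : 0 ≤ r)
    {g : ℂ → ℝ} {F : (Fin (n + 1) → ℂ) → ℝ} (hg : ContinuousOn g (closedBall 0 r))
    (hF : ContinuousOn F (closedBall 0 r))
    (h : ∀ ζ ∈ closedBall (0 : ℂ) r, g ζ ≤ ∫ y in closedBall (0 : Fin n → ℂ) r, F (Fin.cons ζ y)) :
    ∫ ζ in closedBall (0 : ℂ) r, g ζ ≤ ∫ z in closedBall 0 r, F z := by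
  have hint : IntegrableOn (fun q : ℂ × (Fin n → ℂ) ↦ F (Fin.cons q.1 q.2))
      (closedBall 0 r ×ˢ closedBall 0 r) :=
    (hF.comp (continuous_fst.finCons continuous_snd).continuousOn
      fun q hq ↦ (Fin.cons_mem_closedBall_zero_iff hr).2 hq).integrableOn_compact
      ((isCompact_closedBall _ _).prod (isCompact_closedBall _ _))
  have hint_prod : Integrable (fun q : ℂ × (Fin n → ℂ) ↦ F (Fin.cons q.1 q.2))
      ((volume.restrict (closedBall 0 r)).prod (volume.restrict (closedBall 0 r))) := by
    rw [Measure.prod_restrict]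
    exact hint
  rw [setIntegral_closedBall_fin_succ hr, Measure.volume_eq_prod, setIntegral_prod _ hint]
  exact setIntegral_mono_on (hg.integrableOn_compact (isCompact_closedBall _ _))
    hint_prod.integral_prod_left measurableSet_closedBall h

theorem sq_norm_mul_prod_setIntegral_closedBall_le {V : Type*} [NormedAddCommGroup V]
    [NormedSpace ℂ V] [CompleteSpace V] {n : ℕ} {r : ℝ} (hr : 0 ≤ r) {w : Fin n → ℝ → ℝ}
    (hw : ∀ ℓ, Continuous (w ℓ)) (hw₀ : ∀ ℓ, 0 ≤ w ℓ) {s : (Fin n → ℂ) → V}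
    (hs : DifferentiableOn ℂ s (closedBall 0 r)) :
    ‖s 0‖ ^ 2 * ∏ ℓ, ∫ ζ in closedBall (0 : ℂ) r, w ℓ ‖ζ‖ ≤
      ∫ z in closedBall 0 r, ‖s z‖ ^ 2 * ∏ ℓ, w ℓ ‖z ℓ‖ := by
  induction n with
  | zero =>
    rw [Subsingleton.eq_univ_of_nonempty (⟨0, mem_closedBall_self hr⟩ :
      (closedBall (0 : Fin 0 → ℂ) r).Nonempty), setIntegral_univ,
      Measure.volume_pi_eq_dirac 0, integral_dirac]
    simp
  | succ n ih =>
    set C := ∏ j : Fin n, ∫ ζ in closedBall (0 : ℂ) r, w j.succ ‖ζ‖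
    have hcons : ∀ ζ ∈ closedBall (0 : ℂ) r, ∀ y ∈ closedBall (0 : Fin n → ℂ) r,
        (Fin.cons ζ y : Fin (n + 1) → ℂ) ∈ closedBall 0 r :=
      fun ζ hζ y hy ↦ (Fin.cons_mem_closedBall_zero_iff hr).2 ⟨hζ, hy⟩
    have hline : DifferentiableOn ℂ (fun ζ ↦ s (Fin.cons ζ 0)) (closedBall 0 r) :=
      hs.comp (by fun_prop : Differentiable ℂ fun ζ : ℂ ↦
        (Fin.cons ζ 0 : Fin (n + 1) → ℂ)).differentiableOn
        fun ζ hζ ↦ hcons ζ hζ 0 (mem_closedBall_self hr)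
    have hslice : ∀ ζ ∈ closedBall (0 : ℂ) r, w 0 ‖ζ‖ * (‖s (Fin.cons ζ 0)‖ ^ 2 * C) ≤
        ∫ y in closedBall 0 r, ‖s (Fin.cons ζ y)‖ ^ 2 *
          ∏ ℓ, w ℓ ‖(Fin.cons ζ y : Fin (n + 1) → ℂ) ℓ‖ := by
      intro ζ hζ
      have hs' : DifferentiableOn ℂ (fun y ↦ s (Fin.cons ζ y)) (closedBall 0 r) :=
        hs.comp ((differentiableOn_const ζ).finCons differentiableOn_id) (hcons ζ hζ)
      simp only [Fin.prod_univ_succ, Fin.cons_zero, Fin.cons_succ, mul_left_comm _ (w 0 ‖ζ‖),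
        integral_const_mul]
      exact mul_le_mul_of_nonneg_left (ih (fun j ↦ hw j.succ) (fun j ↦ hw₀ j.succ) hs')
        (hw₀ 0 _)
    calc ‖s 0‖ ^ 2 * ∏ ℓ, ∫ ζ in closedBall (0 : ℂ) r, w ℓ ‖ζ‖
        = (‖s (Fin.cons 0 0)‖ ^ 2 * ∫ ζ in closedBall (0 : ℂ) r, w 0 ‖ζ‖) * C := by
          rw [Fin.prod_univ_succ, ← mul_assoc, show (Fin.cons 0 0 : Fin (n + 1) → ℂ) = 0 from
            Matrix.cons_zero_zero]
      _ ≤ (∫ ζ in closedBall (0 : ℂ) r, ‖s (Fin.cons ζ 0)‖ ^ 2 * w 0 ‖ζ‖) * C := by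
          have hC : 0 ≤ C := Finset.prod_nonneg fun j _ ↦ integral_nonneg fun ζ ↦ hw₀ j.succ _
          gcongr
          exact sq_norm_mul_setIntegral_closedBall_le hr hline (hw 0) (hw₀ 0)
      _ = ∫ ζ in closedBall (0 : ℂ) r, w 0 ‖ζ‖ * (‖s (Fin.cons ζ 0)‖ ^ 2 * C) := by
          rw [← integral_mul_const]
          congr 1 with ζ
          ring
      _ ≤ ∫ z in closedBall 0 r, ‖s z‖ ^ 2 * ∏ ℓ, w ℓ ‖z ℓ‖ :=
          setIntegral_closedBall_le_of_le_setIntegral_slice hr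
            (((hw 0).comp continuous_norm).continuousOn.mul
              ((hline.continuousOn.norm.pow 2).mul continuousOn_const))
            ((hs.continuousOn.norm.pow 2).mul (by fun_prop)) hslice

theorem E_pos {u : ℝ} (hu : u ≠ 0) : 0 < E u := by
  have : rexp (-2 * u ^ 2) < 1 := exp_lt_one_iff.2 (by nlinarith [sq_pos_of_ne_zero hu])
  unfold E
  nlinarith [pi_pos]

theorem E_div_le_setIntegral_closedBall_exp {r p ε μ : ℝ} (hr : 0 ≤ r) (hp : 0 < p)
    (hε : 0 < ε) (hεμ : ε ≤ μ) :
    E (r * √(p * ε)) / (p * μ) ≤ ∫ ζ in closedBall (0 : ℂ) r, rexp (-(2 * p * μ) * ‖ζ‖ ^ 2) := by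
  have hμ : 0 < μ := hε.trans_le hεμ
  rw [setIntegral_closedBall_exp_neg_mul_sq_norm (by positivity) hr, E, mul_pow,
    sq_sqrt (by positivity)]
  have : rexp (-(2 * p * μ) * r ^ 2) ≤ rexp (-2 * (r ^ 2 * (p * ε))) :=
    exp_le_exp.2 (by nlinarith [mul_le_mul_of_nonneg_left hεμ (by positivity : 0 ≤ p * r ^ 2)])
  rw [show π * (1 - rexp (-(2 * p * μ) * r ^ 2)) / (2 * p * μ) =
    π / 2 * (1 - rexp (-(2 * p * μ) * r ^ 2)) / (p * μ) by field_simp]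
  gcongr

theorem pointwise_bound_gaussian_polydisk_general (n : ℕ)
    (r p ε : ℝ) (hr : 0 < r) (hp : 0 < p) (hε : 0 < ε)
    (lam : Fin n → ℝ) (hlam : ∀ ℓ, ε ≤ lam ℓ)
    (s : (Fin n → ℂ) → ℂ) (U : Set (Fin n → ℂ))
    (hP : {z : Fin n → ℂ | ∀ ℓ, ‖z ℓ‖ ≤ r} ⊆ U)
    (hs : DifferentiableOn ℂ s U) :
    ‖s 0‖ ^ 2 ≤
      (p ^ n * (∏ ℓ, lam ℓ) / E (r * Real.sqrt (p * ε)) ^ n) *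
        ∫ z in {z : Fin n → ℂ | ∀ ℓ, ‖z ℓ‖ ≤ r},
          ‖s z‖ ^ 2 * Real.exp (-2 * p * ∑ ℓ, lam ℓ * ‖z ℓ‖ ^ 2) := by
  have hlam₀ : ∀ ℓ, 0 < lam ℓ := fun ℓ ↦ hε.trans_le (hlam ℓ)
  have hpoly : {z : Fin n → ℂ | ∀ ℓ, ‖z ℓ‖ ≤ r} = closedBall 0 r := by
    ext z
    simp [pi_norm_le_iff_of_nonneg hr.le]
  have hE : 0 < E (r * √(p * ε)) := E_pos (by positivity)
  have hweight : ∀ z : Fin n → ℂ, ∏ ℓ, rexp (-(2 * p * lam ℓ) * ‖z ℓ‖ ^ 2) =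
      rexp (-2 * p * ∑ ℓ, lam ℓ * ‖z ℓ‖ ^ 2) := by
    intro z
    rw [← Real.exp_sum, Finset.mul_sum]
    exact congrArg rexp (Finset.sum_congr rfl fun ℓ _ ↦ by ring)
  have hconst : E (r * √(p * ε)) ^ n / (p ^ n * ∏ ℓ, lam ℓ) ≤
      ∏ ℓ, ∫ ζ in closedBall (0 : ℂ) r, rexp (-(2 * p * lam ℓ) * ‖ζ‖ ^ 2) := by
    rw [← Fin.prod_const, ← Fin.prod_const, ← Finset.prod_mul_distrib, ← Finset.prod_div_distrib]
    exact Finset.prod_le_prod (fun ℓ _ ↦ by have := hlam₀ ℓ; positivity)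
      fun ℓ _ ↦ E_div_le_setIntegral_closedBall_exp hr.le hp hε (hlam ℓ)
  have hmain := sq_norm_mul_prod_setIntegral_closedBall_le hr.le
    (w := fun ℓ t ↦ rexp (-(2 * p * lam ℓ) * t ^ 2)) (fun ℓ ↦ by fun_prop)
    (fun ℓ t ↦ (exp_pos _).le) (hs.mono (hpoly ▸ hP))
  simp only [hweight] at hmain
  have hlamprod : 0 < ∏ ℓ, lam ℓ := Finset.prod_pos fun ℓ _ ↦ hlam₀ ℓ
  rw [hpoly, ← div_le_iff₀' (by positivity), div_div_eq_mul_div, mul_div_assoc]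
  exact (mul_le_mul_of_nonneg_left hconst (sq_nonneg _)).trans hmain

/-- Pointwise upper bound for weighted L² norms of holomorphic functions: if `λ_ℓ ≥ ε > 0`
and `s` is holomorphic on a neighborhood of `Δⁿ(0,r)`, then
`|s(0)|² ≤ (pⁿ λ₁⋯λₙ / E(r√(pε))ⁿ) ∫_{Δⁿ(0,r)} |s|² e^{-2p ∑ λ_ℓ |z_ℓ|²} dm`. -/
theorem pointwise_bound_gaussian_polydisk (n : ℕ) (hn : 1 ≤ n)
    (r p ε : ℝ) (hr : 0 < r) (hp : 0 < p) (hε : 0 < ε)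
    (lam : Fin n → ℝ) (hlam : ∀ ℓ, ε ≤ lam ℓ)
    (s : (Fin n → ℂ) → ℂ) (U : Set (Fin n → ℂ)) (hU : IsOpen U)
    (hP : {z : Fin n → ℂ | ∀ ℓ, ‖z ℓ‖ ≤ r} ⊆ U)
    (hs : DifferentiableOn ℂ s U) :
    ‖s 0‖ ^ 2 ≤
      (p ^ n * (∏ ℓ, lam ℓ) / E (r * Real.sqrt (p * ε)) ^ n) *
        ∫ z in {z : Fin n → ℂ | ∀ ℓ, ‖z ℓ‖ ≤ r},
          ‖s z‖ ^ 2 * Real.exp (-2 * p * ∑ ℓ, lam ℓ * ‖z ℓ‖ ^ 2) :=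
  pointwise_bound_gaussian_polydisk_general n r p ε hr hp hε lam hlam s U hP hs
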